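/- Let 0 → A → V → B → 0 be a short exact sequence of tame persistence modules over Z_2 where every interval in the barcode of B is finite. Let E_0 be a barcode basis of A and E_1 = {β_i ∼ [a_i, b_i)} a barcode basis of B. Define B·E^2 as the direct sum of interval modules [a_i, ∞) and D·E^2 as the direct sum of interval modules [b_i, ∞), and let ext: D·E^2 → A ⊕ B·E^2 be the persistence morphism whose associated matrix is the block matrix (EXT; Id), where the i-th column of EXT gives the coordinates in E_0 of the image in A at parameter b_i of a lift of β_i. Then V is isomorphic to the quotient (A ⊕ B·E^2)/ext(D·E^2). -/

import Mathlib

noncomputable section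

/-- A persistence module over `ℤ/2`. -/
structure PersMod where
  V : ℝ → Type
  [grp : ∀ t, AddCommGroup (V t)]
  [mod : ∀ t, Module (ZMod 2) (V t)]
  ρ : ∀ s t : ℝ, s ≤ t → V s →ₗ[ZMod 2] V t
  ρ_id : ∀ (t : ℝ) (h : t ≤ t) (x : V t), ρ t t h x = x
  ρ_comp : ∀ (r s t : ℝ) (h1 : r ≤ s) (h2 : s ≤ t) (x : V r),
    ρ s t h2 (ρ r s h1 x) = ρ r t (h1.trans h2) x

attribute [instance] PersMod.grp PersMod.mod

/-- A persistence morphism: a family of linear maps commuting with the structure maps. -/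
structure PersHom (M N : PersMod) where
  map : ∀ t : ℝ, M.V t →ₗ[ZMod 2] N.V t
  comm : ∀ (s t : ℝ) (h : s ≤ t) (x : M.V s), map t (M.ρ s t h x) = N.ρ s t h (map s x)

/-- A barcode basis of the persistence module `M` with intervals `[a i, b i)`, `i : Fin N`:
for each generator a compatible family of vectors living on its interval and dying past it,
whose alive members form a basis of `M.V t` at every `t`. -/
structure BarcodeBasis (M : PersMod) (N : ℕ) (a b : Fin N → ℝ) where
  vec : ∀ (i : Fin N) (t : ℝ), a i ≤ t → t < b i → M.V t
  compat : ∀ (i : Fin N) (s t : ℝ) (hs : a i ≤ s) (h : s ≤ t) (ht : t < b i),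
    M.ρ s t h (vec i s hs (lt_of_le_of_lt h ht)) = vec i t (hs.trans h) ht
  dies : ∀ (i : Fin N) (s : ℝ) (hs : a i ≤ s) (hs' : s < b i) (t : ℝ) (h : s ≤ t),
    b i ≤ t → M.ρ s t h (vec i s hs hs') = 0
  indep : ∀ t : ℝ, LinearIndependent (ZMod 2)
    (fun i : {i : Fin N // a i ≤ t ∧ t < b i} => vec i.1 t i.2.1 i.2.2)
  spans : ∀ t : ℝ, Submodule.span (ZMod 2)
    (Set.range (fun i : {i : Fin N // a i ≤ t ∧ t < b i} => vec i.1 t i.2.1 i.2.2)) = ⊤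

/-- The underlying graded vector space of `A ⊕ B·E²` at parameter `t`: the direct sum of
`A_t` with the interval modules `ℤ/2[a1 i, ∞)` generated by the births of the barcode of
`B`. -/
abbrev ExtTarget (Aa : PersMod) (N1 : ℕ) (a1 : Fin N1 → ℝ) (t : ℝ) : Type :=
  Aa.V t × ({i : Fin N1 // a1 i ≤ t} → ZMod 2)

/-- The element of `A_t` with coordinates `col` in the barcode basis `E0` (sum over the
generators alive at `t`). -/
noncomputable def extVec (Aa : PersMod) (N0 : ℕ) (a0 b0 : Fin N0 → ℝ)
    (E0 : BarcodeBasis Aa N0 a0 b0) (col : Fin N0 → ZMod 2) (t : ℝ) : Aa.V t :=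
  ∑ j : Fin N0, if h : a0 j ≤ t ∧ t < b0 j then col j • E0.vec j t h.1 h.2 else 0

/-- The generator of the relation submodule `ext(D·E²)` corresponding to the `i`-th
barcode generator of `B`, alive from its death value `b1 i` on: its `A`-component is given
by the `i`-th column of the extension matrix `EXT` (pushed forward from parameter `b1 i`),
and its `B·E²`-component is the `i`-th canonical basis vector. -/
noncomputable def extGen (Aa : PersMod) (N0 : ℕ) (a0 b0 : Fin N0 → ℝ)
    (E0 : BarcodeBasis Aa N0 a0 b0) (N1 : ℕ) (a1 b1 : Fin N1 → ℝ)
    (EXT : Fin N0 → Fin N1 → ZMod 2) (i : Fin N1) (t : ℝ) (hi : b1 i ≤ t) :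
    ExtTarget Aa N1 a1 t :=
  (Aa.ρ (b1 i) t hi (extVec Aa N0 a0 b0 E0 (fun j => EXT j i) (b1 i)),
   fun k => if k.1 = i then 1 else 0)

/-- The relation submodule `ext(D·E²) ⊆ A ⊕ B·E²` at parameter `t`: spanned by the images
of the generators of `D·E²` already born at `t`. -/
noncomputable def extRel (Aa : PersMod) (N0 : ℕ) (a0 b0 : Fin N0 → ℝ)
    (E0 : BarcodeBasis Aa N0 a0 b0) (N1 : ℕ) (a1 b1 : Fin N1 → ℝ)
    (EXT : Fin N0 → Fin N1 → ZMod 2) (t : ℝ) :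
    Submodule (ZMod 2) (ExtTarget Aa N1 a1 t) :=
  Submodule.span (ZMod 2)
    {x | ∃ (i : Fin N1) (hi : b1 i ≤ t), x = extGen Aa N0 a0 b0 E0 N1 a1 b1 EXT i t hi}

/-- The structure map of `B·E²` from parameter `s` to parameter `t`. -/
noncomputable def resMap (N1 : ℕ) (a1 : Fin N1 → ℝ) (s t : ℝ) :
    ({i : Fin N1 // a1 i ≤ s} → ZMod 2) →ₗ[ZMod 2] ({i : Fin N1 // a1 i ≤ t} → ZMod 2) where
  toFun f k := if h' : a1 k.1 ≤ s then f ⟨k.1, h'⟩ else 0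
  map_add' := by
    intro f g; funext k; by_cases h' : a1 k.1 ≤ s <;> simp [h']
  map_smul' := by
    intro cc f; funext k; by_cases h' : a1 k.1 ≤ s <;> simp [h']

/-- The structure map of `A ⊕ B·E²` from parameter `s` to parameter `t`. -/
noncomputable def extMap (Aa : PersMod) (N1 : ℕ) (a1 : Fin N1 → ℝ) (s t : ℝ) (h : s ≤ t) :
    ExtTarget Aa N1 a1 s →ₗ[ZMod 2] ExtTarget Aa N1 a1 t :=
  (Aa.ρ s t h).prodMap (resMap N1 a1 s t)

/-! At each `t`, send `(a, f) ∈ A_t ⊕ ℤ/2^{k : a1 k ≤ t}` to `i(a) + Σ f_k ℓ_k(t)`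
(`extPresentation`), where `ℓ_k` (`extLift`) is the chosen lift of `β_k`, continued past its
death `b1 k` by the image in `V` of the `k`-th column of `EXT`; the defining property of `EXT`
is exactly what makes `ℓ_k` compatible with the structure maps, so this is a morphism of
persistence modules. It is onto because the alive `β_k` span `B_t` and the sequence is exact.
Its kernel is `ext(D·E²)_t`: each relation generator maps to `ℓ_k(t) + ℓ_k(t) = 0`, and once
these are subtracted, an element of the kernel has its `B·E²`-part supported on bars alive at
`t`; applying `p` and the independence of `E1` kill that part, and injectivity of `i` the rest.
The first isomorphism theorem, applied levelwise, concludes. -/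

theorem sum_subtype_dite_eq_sum_subtype {ι M : Type*} [Fintype ι] [AddCommMonoid M]
    {p q : ι → Prop} [DecidablePred p] [DecidablePred q] (hpq : ∀ i, p i → q i)
    (f : ∀ i, p i → M) :
    ∑ k : {i // q i}, (if h : p k then f k h else 0) = ∑ k : {i // p i}, f k k.2 := by
  rw [Finset.sum_dite, Finset.sum_const_zero, add_zero]
  exact Fintype.sum_equiv ((Equiv.subtypeEquivRight (by simp)).trans
    (Equiv.subtypeSubtypeEquivSubtype (hpq _))) _ _ fun _ => rfl

theorem exists_linearEquiv_quotient_of_ker_eq {ι R : Type*} [Preorder ι] [Ring R]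
    {X Y : ι → Type*} [∀ t, AddCommGroup (X t)] [∀ t, Module R (X t)]
    [∀ t, AddCommGroup (Y t)] [∀ t, Module R (Y t)]
    (ρX : ∀ s t, s ≤ t → X s →ₗ[R] X t) (ρY : ∀ s t, s ≤ t → Y s →ₗ[R] Y t)
    (Φ : ∀ t, X t →ₗ[R] Y t) (hΦ : ∀ t, Function.Surjective (Φ t))
    (hcomm : ∀ s t (h : s ≤ t) (x : X s), ρY s t h (Φ s x) = Φ t (ρX s t h x))
    (K : ∀ t, Submodule R (X t)) (hK : ∀ t, LinearMap.ker (Φ t) = K t) :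
    ∃ (e : ∀ t, Y t ≃ₗ[R] X t ⧸ K t)
      (hle : ∀ s t (h : s ≤ t), K s ≤ (K t).comap (ρX s t h)),
      ∀ s t (h : s ≤ t) (y : Y s),
        e t (ρY s t h y) = (K s).mapQ (K t) (ρX s t h) (hle s t h) (e s y) := by
  obtain rfl : K = fun t => LinearMap.ker (Φ t) := funext fun t => (hK t).symm
  refine ⟨fun t => ((Φ t).quotKerEquivOfSurjective (hΦ t)).symm,
    fun s t h x hx => by simp_all [← hcomm], fun s t h y => ?_⟩
  obtain ⟨x, rfl⟩ := hΦ s y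
  simp [hcomm]

section ExtensionProblem

variable {Aa Vv Bb : PersMod} {N0 N1 : ℕ} {a0 b0 : Fin N0 → ℝ} {a1 b1 : Fin N1 → ℝ}
  (ii : PersHom Aa Vv) (pp : PersHom Vv Bb) (E0 : BarcodeBasis Aa N0 a0 b0)
  (E1 : BarcodeBasis Bb N1 a1 b1)
  (lift : ∀ (i : Fin N1) (t : ℝ), a1 i ≤ t → t < b1 i → Vv.V t)
  (EXT : Fin N0 → Fin N1 → ZMod 2)

def extLift (i : Fin N1) (t : ℝ) (h : a1 i ≤ t) : Vv.V t :=
  if h' : t < b1 i then lift i t h h'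
  else Vv.ρ (b1 i) t (not_lt.1 h')
    (ii.map (b1 i) (extVec Aa N0 a0 b0 E0 (fun j => EXT j i) (b1 i)))

def extPresentation (t : ℝ) : ExtTarget Aa N1 a1 t →ₗ[ZMod 2] Vv.V t :=
  (ii.map t).coprod (Fintype.linearCombination (ZMod 2)
    fun k : {i // a1 i ≤ t} => extLift ii E0 lift EXT k.1 t k.2)

lemma extPresentation_apply (t : ℝ) (x : ExtTarget Aa N1 a1 t) :
    extPresentation ii E0 lift EXT t x =
      ii.map t x.1 + ∑ k, x.2 k • extLift ii E0 lift EXT k.1 t k.2 :=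
  rfl

lemma ρ_extLift
    (hliftcompat : ∀ (i : Fin N1) (s t : ℝ) (hs : a1 i ≤ s) (h : s ≤ t) (ht : t < b1 i),
      Vv.ρ s t h (lift i s hs (lt_of_le_of_lt h ht)) = lift i t (hs.trans h) ht)
    (hEXT : ∀ (i : Fin N1) (s : ℝ) (hs : a1 i ≤ s) (hs' : s < b1 i),
      ii.map (b1 i) (extVec Aa N0 a0 b0 E0 (fun j => EXT j i) (b1 i)) =
        Vv.ρ s (b1 i) (le_of_lt hs') (lift i s hs hs'))
    (i : Fin N1) (s t : ℝ) (hs : a1 i ≤ s) (h : s ≤ t) :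
    Vv.ρ s t h (extLift ii E0 lift EXT i s hs) = extLift ii E0 lift EXT i t (hs.trans h) := by
  unfold extLift
  by_cases ht : t < b1 i
  · rw [dif_pos (h.trans_lt ht), dif_pos ht, hliftcompat]
  · rw [dif_neg ht]
    by_cases hs' : s < b1 i
    · rw [dif_pos hs', hEXT i s hs hs', Vv.ρ_comp]
    · rw [dif_neg hs', Vv.ρ_comp]

lemma ρ_extPresentation
    (hliftcompat : ∀ (i : Fin N1) (s t : ℝ) (hs : a1 i ≤ s) (h : s ≤ t) (ht : t < b1 i),
      Vv.ρ s t h (lift i s hs (lt_of_le_of_lt h ht)) = lift i t (hs.trans h) ht)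
    (hEXT : ∀ (i : Fin N1) (s : ℝ) (hs : a1 i ≤ s) (hs' : s < b1 i),
      ii.map (b1 i) (extVec Aa N0 a0 b0 E0 (fun j => EXT j i) (b1 i)) =
        Vv.ρ s (b1 i) (le_of_lt hs') (lift i s hs hs'))
    (s t : ℝ) (h : s ≤ t) (x : ExtTarget Aa N1 a1 s) :
    Vv.ρ s t h (extPresentation ii E0 lift EXT s x) =
      extPresentation ii E0 lift EXT t (extMap Aa N1 a1 s t h x) := by
  simp only [extPresentation_apply, extMap, resMap, LinearMap.prodMap_apply, LinearMap.coe_mk,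
    AddHom.coe_mk, map_add, map_sum, map_smul, ii.comm,
    ρ_extLift ii E0 lift EXT hliftcompat hEXT, dite_smul, zero_smul]
  exact congrArg _ (sum_subtype_dite_eq_sum_subtype (fun i hi => hi.trans h)
    fun i hi => x.2 ⟨i, hi⟩ • extLift ii E0 lift EXT i t (hi.trans h)).symm

lemma pp_extLift (hexact : ∀ t, Function.Exact (ii.map t) (pp.map t))
    (hlift : ∀ (i : Fin N1) (t : ℝ) (h1 : a1 i ≤ t) (h2 : t < b1 i),
      pp.map t (lift i t h1 h2) = E1.vec i t h1 h2)
    (i : Fin N1) (t : ℝ) (h : a1 i ≤ t) :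
    pp.map t (extLift ii E0 lift EXT i t h) = if h' : t < b1 i then E1.vec i t h h' else 0 := by
  unfold extLift
  split_ifs with h'
  · exact hlift i t h h'
  · rw [pp.comm, (hexact _).apply_apply_eq_zero, map_zero]

lemma pp_extPresentation (hexact : ∀ t, Function.Exact (ii.map t) (pp.map t))
    (hlift : ∀ (i : Fin N1) (t : ℝ) (h1 : a1 i ≤ t) (h2 : t < b1 i),
      pp.map t (lift i t h1 h2) = E1.vec i t h1 h2)
    (t : ℝ) (x : ExtTarget Aa N1 a1 t) :
    pp.map t (extPresentation ii E0 lift EXT t x) =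
      ∑ k : {i // a1 i ≤ t ∧ t < b1 i}, x.2 ⟨k, k.2.1⟩ • E1.vec k t k.2.1 k.2.2 := by
  rw [← sum_subtype_dite_eq_sum_subtype (q := fun i => a1 i ≤ t) (fun i hi => hi.1)
    fun i hi => x.2 ⟨i, hi.1⟩ • E1.vec i t hi.1 hi.2]
  simp only [extPresentation_apply, map_add, (hexact t).apply_apply_eq_zero, zero_add, map_sum,
    map_smul, pp_extLift ii pp E0 E1 lift EXT hexact hlift, smul_dite, smul_zero]
  exact Finset.sum_congr rfl fun k _ => by simp only [k.2, true_and]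

lemma extPresentation_surjective (hexact : ∀ t, Function.Exact (ii.map t) (pp.map t))
    (hlift : ∀ (i : Fin N1) (t : ℝ) (h1 : a1 i ≤ t) (h2 : t < b1 i),
      pp.map t (lift i t h1 h2) = E1.vec i t h1 h2)
    (t : ℝ) : Function.Surjective (extPresentation ii E0 lift EXT t) := by
  intro v
  obtain ⟨c, hc⟩ := (Submodule.mem_span_range_iff_exists_fun (ZMod 2)).1
    (E1.spans t ▸ Submodule.mem_top : pp.map t v ∈ _)
  let f : {i // a1 i ≤ t} → ZMod 2 := fun k => if h : t < b1 k then c ⟨k, k.2, h⟩ else 0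
  have hf : pp.map t (extPresentation ii E0 lift EXT t (0, f)) = pp.map t v := by
    rw [pp_extPresentation ii pp E0 E1 lift EXT hexact hlift, ← hc]
    exact Finset.sum_congr rfl fun k _ => by simp only [f, dif_pos k.2.2]
  obtain ⟨a, ha⟩ := (hexact t (v - extPresentation ii E0 lift EXT t (0, f))).1
    (by rw [map_sub, hf, sub_self])
  refine ⟨(a, f), ?_⟩
  rw [extPresentation_apply, ha]
  simp [extPresentation_apply]

lemma extPresentation_extGen (hne : ∀ i : Fin N1, a1 i < b1 i)
    (i : Fin N1) (t : ℝ) (hi : b1 i ≤ t) :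
    extPresentation ii E0 lift EXT t (extGen Aa N0 a0 b0 E0 N1 a1 b1 EXT i t hi) = 0 := by
  have ha : a1 i ≤ t := (hne i).le.trans hi
  have hsingle : (fun k : {j // a1 j ≤ t} => if k.1 = i then (1 : ZMod 2) else 0) =
      Pi.single ⟨i, ha⟩ 1 := by
    ext k
    simp [Pi.single_apply, Subtype.ext_iff]
  rw [extPresentation, extGen, LinearMap.coprod_apply, hsingle,
    Fintype.linearCombination_apply_single, one_smul, extLift, dif_neg hi.not_gt, ← ii.comm,
    ← two_smul (ZMod 2), show (2 : ZMod 2) = 0 from rfl, zero_smul]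

lemma extRel_le_ker_extPresentation (hne : ∀ i : Fin N1, a1 i < b1 i) (t : ℝ) :
    extRel Aa N0 a0 b0 E0 N1 a1 b1 EXT t ≤ LinearMap.ker (extPresentation ii E0 lift EXT t) := by
  rw [extRel, Submodule.span_le]
  rintro _ ⟨i, hi, rfl⟩
  exact extPresentation_extGen ii E0 lift EXT hne i t hi

lemma exists_mem_extRel_snd_eq_of_le (t : ℝ) (f : {i // a1 i ≤ t} → ZMod 2) :
    ∃ y ∈ extRel Aa N0 a0 b0 E0 N1 a1 b1 EXT t, ∀ k, b1 k.1 ≤ t → y.2 k = f k := by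
  refine ⟨∑ k, if h : b1 k.1 ≤ t then f k • extGen Aa N0 a0 b0 E0 N1 a1 b1 EXT k t h else 0,
    Submodule.sum_mem _ fun k _ => ?_, fun k hk => ?_⟩
  · split_ifs with h
    · exact Submodule.smul_mem _ _ (Submodule.subset_span ⟨k, h, rfl⟩)
    · exact Submodule.zero_mem _
  · rw [Prod.snd_sum, Finset.sum_apply, Finset.sum_eq_single k]
    · simp [hk, extGen]
    · intro j _ hj
      split_ifs <;> simp [extGen, Subtype.val_inj, Ne.symm hj]
    · simp

lemma eq_zero_of_extPresentation_eq_zero (hinj : ∀ t, Function.Injective (ii.map t))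
    (hexact : ∀ t, Function.Exact (ii.map t) (pp.map t))
    (hlift : ∀ (i : Fin N1) (t : ℝ) (h1 : a1 i ≤ t) (h2 : t < b1 i),
      pp.map t (lift i t h1 h2) = E1.vec i t h1 h2)
    (t : ℝ) (x : ExtTarget Aa N1 a1 t) (hdead : ∀ k, b1 k.1 ≤ t → x.2 k = 0)
    (hx : extPresentation ii E0 lift EXT t x = 0) : x = 0 := by
  have halive : ∀ k : {i // a1 i ≤ t ∧ t < b1 i}, x.2 ⟨k, k.2.1⟩ = 0 := by
    refine Fintype.linearIndependent_iff.1 (E1.indep t) _ ?_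
    rw [← pp_extPresentation ii pp E0 E1 lift EXT hexact hlift, hx, map_zero]
  have hsnd : x.2 = 0 :=
    funext fun k => (le_or_gt (b1 k) t).elim (hdead k) fun h => halive ⟨k, k.2, h⟩
  have hfst : x.1 = 0 := (injective_iff_map_eq_zero _).1 (hinj t) _ <| by
    simpa [extPresentation_apply, hsnd] using hx
  exact Prod.ext hfst hsnd

lemma ker_extPresentation (hne : ∀ i : Fin N1, a1 i < b1 i)
    (hinj : ∀ t, Function.Injective (ii.map t))
    (hexact : ∀ t, Function.Exact (ii.map t) (pp.map t))
    (hlift : ∀ (i : Fin N1) (t : ℝ) (h1 : a1 i ≤ t) (h2 : t < b1 i),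
      pp.map t (lift i t h1 h2) = E1.vec i t h1 h2) (t : ℝ) :
    LinearMap.ker (extPresentation ii E0 lift EXT t) = extRel Aa N0 a0 b0 E0 N1 a1 b1 EXT t := by
  refine le_antisymm (fun x hx => ?_) (extRel_le_ker_extPresentation ii E0 lift EXT hne t)
  obtain ⟨y, hy, hyx⟩ := exists_mem_extRel_snd_eq_of_le E0 EXT t x.2
  have hker : x - y ∈ LinearMap.ker (extPresentation ii E0 lift EXT t) :=
    sub_mem hx (extRel_le_ker_extPresentation ii E0 lift EXT hne t hy)
  obtain rfl : x = y := sub_eq_zero.1 <|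
    eq_zero_of_extPresentation_eq_zero ii pp E0 E1 lift EXT hinj hexact hlift t _
      (fun k hk => sub_eq_zero.2 (hyx k hk).symm) hker
  exact hy

end ExtensionProblem

theorem extension_problem_solution_general
    (Aa Vv Bb : PersMod)
    (ii : PersHom Aa Vv) (pp : PersHom Vv Bb)
    (hinj : ∀ t : ℝ, Function.Injective (ii.map t))
    (hexact : ∀ t : ℝ, LinearMap.range (ii.map t) = LinearMap.ker (pp.map t))
    (N0 : ℕ) (a0 b0 : Fin N0 → ℝ) (E0 : BarcodeBasis Aa N0 a0 b0)
    (N1 : ℕ) (a1 b1 : Fin N1 → ℝ) (E1 : BarcodeBasis Bb N1 a1 b1)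
    (hne : ∀ i : Fin N1, a1 i < b1 i)
    (lift : ∀ (i : Fin N1) (t : ℝ), a1 i ≤ t → t < b1 i → Vv.V t)
    (hlift : ∀ (i : Fin N1) (t : ℝ) (h1 : a1 i ≤ t) (h2 : t < b1 i),
      pp.map t (lift i t h1 h2) = E1.vec i t h1 h2)
    (hliftcompat : ∀ (i : Fin N1) (s t : ℝ) (hs : a1 i ≤ s) (h : s ≤ t) (ht : t < b1 i),
      Vv.ρ s t h (lift i s hs (lt_of_le_of_lt h ht)) = lift i t (hs.trans h) ht)
    (EXT : Fin N0 → Fin N1 → ZMod 2)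
    (hEXT : ∀ (i : Fin N1) (s : ℝ) (hs : a1 i ≤ s) (hs' : s < b1 i),
      ii.map (b1 i) (extVec Aa N0 a0 b0 E0 (fun j => EXT j i) (b1 i)) =
        Vv.ρ s (b1 i) (le_of_lt hs') (lift i s hs hs')) :
    ∃ (eq : ∀ t : ℝ, Vv.V t ≃ₗ[ZMod 2]
        (ExtTarget Aa N1 a1 t ⧸ extRel Aa N0 a0 b0 E0 N1 a1 b1 EXT t))
      (hle : ∀ (s t : ℝ) (h : s ≤ t),
        extRel Aa N0 a0 b0 E0 N1 a1 b1 EXT s ≤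
          (extRel Aa N0 a0 b0 E0 N1 a1 b1 EXT t).comap (extMap Aa N1 a1 s t h)),
      ∀ (s t : ℝ) (h : s ≤ t) (x : Vv.V s),
        eq t (Vv.ρ s t h x) =
          Submodule.mapQ (extRel Aa N0 a0 b0 E0 N1 a1 b1 EXT s)
            (extRel Aa N0 a0 b0 E0 N1 a1 b1 EXT t)
            (extMap Aa N1 a1 s t h) (hle s t h) (eq s x) := by
  have hexact' (t : ℝ) : Function.Exact (ii.map t) (pp.map t) :=
    LinearMap.exact_iff.2 (hexact t).symm
  exact exists_linearEquiv_quotient_of_ker_eq (extMap Aa N1 a1) Vv.ρ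
    (extPresentation ii E0 lift EXT) (extPresentation_surjective ii pp E0 E1 lift EXT hexact' hlift)
    (ρ_extPresentation ii E0 lift EXT hliftcompat hEXT) _
    (ker_extPresentation ii pp E0 E1 lift EXT hne hinj hexact' hlift)

/-- The extension problem: let `0 → A → V → B → 0` be a short exact sequence of tame
persistence modules over `ℤ/2` in which every interval of the barcode of `B` is finite
(all death values `b1 i` are real numbers).  Let `E0` be a barcode basis of `A` and
`E1 = {β_i ∼ [a1 i, b1 i)}` a barcode basis of `B`; choose compatible lifts of the `β_i`
to `V`, and let `EXT` be the extension matrix, whose `i`-th column records the coordinates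
in `E0` of the image in `A` at parameter `b1 i` of the lift of `β_i`.  Then `V` is
isomorphic, as a persistence module, to the quotient `(A ⊕ B·E²) / ext(D·E²)`, where
`B·E²` (resp. `D·E²`) is the direct sum of the interval modules `[a1 i, ∞)` (resp.
`[b1 i, ∞)`) and `ext` has block matrix `(EXT; Id)`. -/
theorem extension_problem_solution
    (Aa Vv Bb : PersMod)
    (ii : PersHom Aa Vv) (pp : PersHom Vv Bb)
    (hinj : ∀ t : ℝ, Function.Injective (ii.map t))
    (hsurj : ∀ t : ℝ, Function.Surjective (pp.map t))
    (hexact : ∀ t : ℝ, LinearMap.range (ii.map t) = LinearMap.ker (pp.map t))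
    (N0 : ℕ) (a0 b0 : Fin N0 → ℝ) (E0 : BarcodeBasis Aa N0 a0 b0)
    (N1 : ℕ) (a1 b1 : Fin N1 → ℝ) (E1 : BarcodeBasis Bb N1 a1 b1)
    (hne : ∀ i : Fin N1, a1 i < b1 i)
    (lift : ∀ (i : Fin N1) (t : ℝ), a1 i ≤ t → t < b1 i → Vv.V t)
    (hlift : ∀ (i : Fin N1) (t : ℝ) (h1 : a1 i ≤ t) (h2 : t < b1 i),
      pp.map t (lift i t h1 h2) = E1.vec i t h1 h2)
    (hliftcompat : ∀ (i : Fin N1) (s t : ℝ) (hs : a1 i ≤ s) (h : s ≤ t) (ht : t < b1 i),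
      Vv.ρ s t h (lift i s hs (lt_of_le_of_lt h ht)) = lift i t (hs.trans h) ht)
    (EXT : Fin N0 → Fin N1 → ZMod 2)
    (hEXT : ∀ (i : Fin N1) (s : ℝ) (hs : a1 i ≤ s) (hs' : s < b1 i),
      ii.map (b1 i) (extVec Aa N0 a0 b0 E0 (fun j => EXT j i) (b1 i)) =
        Vv.ρ s (b1 i) (le_of_lt hs') (lift i s hs hs')) :
    ∃ (eq : ∀ t : ℝ, Vv.V t ≃ₗ[ZMod 2]
        (ExtTarget Aa N1 a1 t ⧸ extRel Aa N0 a0 b0 E0 N1 a1 b1 EXT t))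
      (hle : ∀ (s t : ℝ) (h : s ≤ t),
        extRel Aa N0 a0 b0 E0 N1 a1 b1 EXT s ≤
          (extRel Aa N0 a0 b0 E0 N1 a1 b1 EXT t).comap (extMap Aa N1 a1 s t h)),
      ∀ (s t : ℝ) (h : s ≤ t) (x : Vv.V s),
        eq t (Vv.ρ s t h x) =
          Submodule.mapQ (extRel Aa N0 a0 b0 E0 N1 a1 b1 EXT s)
            (extRel Aa N0 a0 b0 E0 N1 a1 b1 EXT t)
            (extMap Aa N1 a1 s t h) (hle s t h) (eq s x) :=
  extension_problem_solution_general Aa Vv Bb ii pp hinj hexact N0 a0 b0 E0 N1 a1 b1 E1 hne lift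
    hlift hliftcompat EXT hEXT
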